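/- arXiv:2102.05969 — 2 statements merged into one kernel-verified Lean document; each statement's English description precedes it below -/
import Mathlib

section
/- Let s₇ be the real 4-dimensional Lie algebra with basis e₁, e₂, e₃, e₄ and nonzero brackets ⁅e₂, e₃⁆ = e₁, ⁅e₂, e₄⁆ = e₃, ⁅e₃, e₄⁆ = −e₂ (all other brackets of basis elements zero, extended bilinearly and antisymmetrically). A linear endomorphism D of s₇ is a derivation of s₇ if and only if there exist real numbers μ₁₁, μ₁₂, μ₁₃, μ₁₄, μ₂₃ such that D e₁ = μ₁₁ e₁, D e₂ = μ₁₂ e₁ + (μ₁₁/2) e₂ − μ₂₃ e₃, D e₃ = μ₁₃ e₁ + μ₂₃ e₂ + (μ₁₁/2) e₃, and D e₄ = μ₁₄ e₁ + μ₁₂ e₂ + μ₁₃ e₃. -/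
/-!
A linear map is a derivation as soon as the Leibniz rule holds on pairs of basis vectors.
Writing `M` for the matrix of `D`, the Leibniz rule on the pairs `(e₁, e₂)`, `(e₁, e₃)`,
`(e₂, e₃)`, `(e₂, e₄)`, `(e₃, e₄)` gives linear relations among the entries of `M`; the last
two together force `2 M₄₄ = 0`, whence `M₂₂ = M₃₃ = M₁₁ / 2`, and the remaining relations
identify the other entries. Conversely, the maps of the stated shape satisfy the Leibniz rule
on every pair of basis vectors.
-/

theorem LinearMap.isDerivation_iff_forall_basis {R L ι : Type*} [CommRing R] [LieRing L]
    [LieAlgebra R L] (b : Module.Basis ι R L) (D : L →ₗ[R] L) :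
    (∀ x y : L, D ⁅x, y⁆ = ⁅D x, y⁆ + ⁅x, D y⁆) ↔
      ∀ i j, D ⁅b i, b j⁆ = ⁅D (b i), b j⁆ + ⁅b i, D (b j)⁆ := by
  refine ⟨fun h i j => h _ _, fun h x y => ?_⟩
  let lie : L →ₗ[R] L →ₗ[R] L := LinearMap.mk₂ R (⁅·, ·⁆) add_lie smul_lie lie_add lie_smul
  have : lie.compr₂ D = lie ∘ₗ D + lie.compl₂ D := LinearMap.ext_basis b b h
  exact LinearMap.congr_fun₂ this x y

section

variable {K L : Type*} [Field K] [LieRing L] [LieAlgebra K L]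

/-- The bracket table of `s₇` in the basis `e₁, e₂, e₃, e₄ = b 0, b 1, b 2, b 3`. -/
structure IsS7Basis (b : Module.Basis (Fin 4) K L) : Prop where
  lie_zero_one : ⁅b 0, b 1⁆ = 0
  lie_zero_two : ⁅b 0, b 2⁆ = 0
  lie_zero_three : ⁅b 0, b 3⁆ = 0
  lie_one_two : ⁅b 1, b 2⁆ = b 0
  lie_one_three : ⁅b 1, b 3⁆ = b 2
  lie_two_three : ⁅b 2, b 3⁆ = -b 1

namespace IsS7Basis

variable {b : Module.Basis (Fin 4) K L}

theorem lie_eq (hb : IsS7Basis b) (x y : L) :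
    ⁅x, y⁆ = (b.repr x 1 * b.repr y 2 - b.repr x 2 * b.repr y 1) • b 0
      + (b.repr x 3 * b.repr y 2 - b.repr x 2 * b.repr y 3) • b 1
      + (b.repr x 1 * b.repr y 3 - b.repr x 3 * b.repr y 1) • b 2 := by
  conv_lhs => rw [← b.sum_repr x, ← b.sum_repr y]
  simp only [Fin.sum_univ_four, add_lie, lie_add, smul_lie, lie_smul, lie_self,
    ← lie_skew (b 1) (b 0), ← lie_skew (b 2) (b 0), ← lie_skew (b 3) (b 0),
    ← lie_skew (b 2) (b 1), ← lie_skew (b 3) (b 1), ← lie_skew (b 3) (b 2),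
    hb.lie_zero_one, hb.lie_zero_two, hb.lie_zero_three, hb.lie_one_two, hb.lie_one_three,
    hb.lie_two_three]
  module

theorem exists_of_isDerivation [NeZero (2 : K)] (hb : IsS7Basis b) (D : L →ₗ[K] L)
    (hD : ∀ x y : L, D ⁅x, y⁆ = ⁅D x, y⁆ + ⁅x, D y⁆) :
    ∃ μ11 μ12 μ13 μ14 μ23 : K,
      D (b 0) = μ11 • b 0 ∧
      D (b 1) = μ12 • b 0 + (μ11 / 2) • b 1 - μ23 • b 2 ∧
      D (b 2) = μ13 • b 0 + μ23 • b 1 + (μ11 / 2) • b 2 ∧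
      D (b 3) = μ14 • b 0 + μ12 • b 1 + μ13 • b 2 := by
  set M := LinearMap.toMatrix b b D with hM
  have key (i j k : Fin 4) :
      b.repr (D ⁅b i, b j⁆) k = b.repr ⁅D (b i), b j⁆ k + b.repr ⁅b i, D (b j)⁆ k := by
    rw [hD, map_add, Finsupp.add_apply]
  obtain ⟨h20, h30⟩ : M 2 0 = 0 ∧ M 3 0 = 0 := by
    simpa [hM, LinearMap.toMatrix_apply, hb.lie_eq, Fin.forall_fin_succ] using key 0 1
  obtain ⟨h10, -⟩ : 0 = M 1 0 ∧ 0 = M 3 0 := by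
    simpa [hM, LinearMap.toMatrix_apply, hb.lie_eq, Fin.forall_fin_succ] using key 0 2
  obtain ⟨h00, h31, -⟩ : M 0 0 = M 1 1 + M 2 2 ∧ M 1 0 = M 3 1 ∧ M 2 0 = M 3 2 ∧ M 3 0 = 0 := by
    simpa [hM, LinearMap.toMatrix_apply, hb.lie_eq, Fin.forall_fin_succ] using key 1 2
  obtain ⟨h02, h12, h22, h32⟩ :
      M 0 2 = M 2 3 ∧ M 1 2 = -M 2 1 ∧ M 2 2 = M 1 1 + M 3 3 ∧ M 3 2 = 0 := by
    simpa [hM, LinearMap.toMatrix_apply, hb.lie_eq, Fin.forall_fin_succ] using key 1 3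
  obtain ⟨h01, h11, -⟩ :
      M 0 1 = M 1 3 ∧ -M 1 1 = -M 2 2 + -M 3 3 ∧ -M 2 1 = M 1 2 ∧ M 3 1 = 0 := by
    simpa [hM, LinearMap.toMatrix_apply, hb.lie_eq, Fin.forall_fin_succ] using key 2 3
  have h33 : M 3 3 = 0 := by
    have : (2 : K) * M 3 3 = 0 := by linear_combination h11 - h22
    simpa [two_ne_zero] using this
  have half11 : M 1 1 = M 0 0 / 2 := by
    rw [h00, h22, h33, add_zero, add_self_div_two]
  have half22 : M 2 2 = M 0 0 / 2 := by rw [← half11, h22, h33, add_zero]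
  have hcol (j : Fin 4) : D (b j) = M 0 j • b 0 + M 1 j • b 1 + M 2 j • b 2 + M 3 j • b 3 := by
    rw [← Fin.sum_univ_four fun i => M i j • b i]
    simp only [hM, LinearMap.toMatrix_apply, b.sum_repr]
  refine ⟨M 0 0, M 0 1, M 0 2, M 0 3, M 1 2, ?_, ?_, ?_, ?_⟩ <;> rw [hcol] <;>
    simp only [← h10, h20, h30, half11, ← h31, h32, half22, ← h01, ← h02, h12, h33] <;> module

theorem isDerivation_of_apply_eq [NeZero (2 : K)] (hb : IsS7Basis b) (D : L →ₗ[K] L)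
    (μ11 μ12 μ13 μ14 μ23 : K) (h0 : D (b 0) = μ11 • b 0)
    (h1 : D (b 1) = μ12 • b 0 + (μ11 / 2) • b 1 - μ23 • b 2)
    (h2 : D (b 2) = μ13 • b 0 + μ23 • b 1 + (μ11 / 2) • b 2)
    (h3 : D (b 3) = μ14 • b 0 + μ12 • b 1 + μ13 • b 2) :
    ∀ x y : L, D ⁅x, y⁆ = ⁅D x, y⁆ + ⁅x, D y⁆ := by
  refine (D.isDerivation_iff_forall_basis b).2 fun i j => ?_
  -- with `μ11 = ν + ν` all scalars are polynomial in the parameters, as `module` needs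
  rw [← add_halves μ11] at h0
  generalize μ11 / 2 = ν at h0 h1 h2
  fin_cases i <;> fin_cases j <;> simp [hb.lie_eq, h0, h1, h2, h3] <;> module

end IsS7Basis

end

/-- Characterization of the derivations of the real 4-dimensional Lie algebra `s₇`
(Šnobl–Winternitz `s_{4,7}`), with basis `e₁ = b 0, …, e₄ = b 3` and nonzero brackets
`⁅e₂, e₃⁆ = e₁`, `⁅e₂, e₄⁆ = e₃`, `⁅e₃, e₄⁆ = -e₂`. -/
theorem stmt_14 {L : Type*} [LieRing L] [LieAlgebra ℝ L]
    (b : Module.Basis (Fin 4) ℝ L)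
    (h12 : ⁅b 0, b 1⁆ = 0) (h13 : ⁅b 0, b 2⁆ = 0) (h14 : ⁅b 0, b 3⁆ = 0)
    (h23 : ⁅b 1, b 2⁆ = b 0) (h24 : ⁅b 1, b 3⁆ = b 2) (h34 : ⁅b 2, b 3⁆ = -b 1)
    (D : L →ₗ[ℝ] L) :
    (∀ x y : L, D ⁅x, y⁆ = ⁅D x, y⁆ + ⁅x, D y⁆) ↔
      ∃ μ11 μ12 μ13 μ14 μ23 : ℝ,
        D (b 0) = μ11 • b 0 ∧
        D (b 1) = μ12 • b 0 + (μ11 / 2) • b 1 - μ23 • b 2 ∧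
        D (b 2) = μ13 • b 0 + μ23 • b 1 + (μ11 / 2) • b 2 ∧
        D (b 3) = μ14 • b 0 + μ12 • b 1 + μ13 • b 2 := by
  have hb : IsS7Basis b := ⟨h12, h13, h14, h23, h24, h34⟩
  refine ⟨hb.exists_of_isDerivation D, ?_⟩
  rintro ⟨μ11, μ12, μ13, μ14, μ23, h0, h1, h2, h3⟩
  exact hb.isDerivation_of_apply_eq D μ11 μ12 μ13 μ14 μ23 h0 h1 h2 h3
end

section
/- Let s₁ be the real 4-dimensional Lie algebra with basis e₁, e₂, e₃, e₄ and nonzero brackets ⁅e₂, e₄⁆ = −e₁ and ⁅e₃, e₄⁆ = −e₃ (all other brackets of basis elements zero, extended bilinearly and antisymmetrically), and let w₀ = e₁ ⊗ e₂ − e₂ ⊗ e₁ ∈ s₁ ⊗[ℝ] s₁. Then the orbit of w₀ under the maps T ⊗ T, for T ranging over all Lie algebra automorphisms of s₁, is exactly the set { λ • w₀ : λ ∈ ℝ, λ > 0 }. That is: for every Lie algebra automorphism T of s₁ there exists λ > 0 with (T ⊗ T) w₀ = λ • w₀, and for every λ > 0 there exists a Lie algebra automorphism T of s₁ with (T ⊗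 T) w₀ = λ • w₀. -/
/-!
Writing `x = ∑ xᵢ bᵢ`, the bracket is `⁅x, y⁆ = (x₃ y₁ - x₁ y₃) b₀ + (x₃ y₂ - x₂ y₃) b₂`.
A Lie automorphism `T` preserves the centre `R b₀`, so `T b₀ = A b₀` with `A ≠ 0`. The relation `⁅T b₂, T b₃⁆ = -T b₂` forces `T b₂ ∈ R b₂`
and the `b₃`-coordinate of `T b₃` to be `1`; then `⁅T b₁, T b₂⁆ = 0` and `⁅T b₁, T b₃⁆ = -A b₀`
force `T b₁ = c b₀ + A b₁`. Hence `T ⊗ T` multiplies `b₀ ⊗ b₁ - b₁ ⊗ b₀` by `A²`. Conversely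
`diag(s, s, 1, 1)` is an automorphism, and it multiplies that tensor by `s²`; take `s = √λ`.
-/

open TensorProduct

theorem LinearEquiv.congr_tmul_sub_tmul_comm_of_triangular {R M : Type*} [CommRing R]
    [AddCommGroup M] [Module R M] {T : M ≃ₗ[R] M} {x y : M} {a c d : R}
    (hx : T x = a • x) (hy : T y = c • x + d • y) :
    TensorProduct.congr T T (x ⊗ₜ[R] y - y ⊗ₜ[R] x) = (a * d) • (x ⊗ₜ[R] y - y ⊗ₜ[R] x) := by
  simp only [map_sub, congr_tmul, hx, hy, tmul_add, add_tmul, tmul_smul, ← smul_tmul']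
  module

theorem Module.Basis.map_lie_of_map_lie {R L L' ι : Type*} [CommRing R] [LieRing L]
    [LieAlgebra R L] [LieRing L'] [LieAlgebra R L'] [Fintype ι] (b : Module.Basis ι R L)
    (f : L →ₗ[R] L') (h : ∀ i j, f ⁅b i, b j⁆ = ⁅f (b i), f (b j)⁆) (x y : L) :
    f ⁅x, y⁆ = ⁅f x, f y⁆ := by
  rw [← b.sum_repr x, ← b.sum_repr y]
  simp only [sum_lie, lie_sum, smul_lie, lie_smul, map_sum, map_smul, h]

/-- `b i` plays the role of the paper's `e_{i+1}`. -/
structure IsS41Basis {R L : Type*} [CommRing R] [LieRing L] [LieAlgebra R L]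
    (b : Module.Basis (Fin 4) R L) : Prop where
  lie_zero_one : ⁅b 0, b 1⁆ = 0
  lie_zero_two : ⁅b 0, b 2⁆ = 0
  lie_zero_three : ⁅b 0, b 3⁆ = 0
  lie_one_two : ⁅b 1, b 2⁆ = 0
  lie_one_three : ⁅b 1, b 3⁆ = -b 0
  lie_two_three : ⁅b 2, b 3⁆ = -b 2

namespace IsS41Basis

variable {R L : Type*} [CommRing R] [LieRing L] [LieAlgebra R L] {b : Module.Basis (Fin 4) R L}

theorem lie_eq (hb : IsS41Basis b) (x y : L) :
    ⁅x, y⁆ = (b.repr x 3 * b.repr y 1 - b.repr x 1 * b.repr y 3) • b 0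
      + (b.repr x 3 * b.repr y 2 - b.repr x 2 * b.repr y 3) • b 2 := by
  have h₁₀ : ⁅b 1, b 0⁆ = 0 := by rw [← lie_skew, hb.lie_zero_one, neg_zero]
  have h₂₀ : ⁅b 2, b 0⁆ = 0 := by rw [← lie_skew, hb.lie_zero_two, neg_zero]
  have h₃₀ : ⁅b 3, b 0⁆ = 0 := by rw [← lie_skew, hb.lie_zero_three, neg_zero]
  have h₂₁ : ⁅b 2, b 1⁆ = 0 := by rw [← lie_skew, hb.lie_one_two, neg_zero]
  have h₃₁ : ⁅b 3, b 1⁆ = b 0 := by rw [← lie_skew, hb.lie_one_three, neg_neg]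
  have h₃₂ : ⁅b 3, b 2⁆ = b 2 := by rw [← lie_skew, hb.lie_two_three, neg_neg]
  conv_lhs => rw [← b.sum_repr x, ← b.sum_repr y]
  simp only [Fin.sum_univ_four, add_lie, lie_add, smul_lie, lie_smul, lie_self, hb.lie_zero_one,
    hb.lie_zero_two, hb.lie_zero_three, hb.lie_one_two, hb.lie_one_three, hb.lie_two_three,
    h₁₀, h₂₀, h₃₀, h₂₁, h₃₁, h₃₂]
  module

theorem repr_lie_zero (hb : IsS41Basis b) (x y : L) :
    b.repr ⁅x, y⁆ 0 = b.repr x 3 * b.repr y 1 - b.repr x 1 * b.repr y 3 := by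
  simp [hb.lie_eq]

theorem repr_lie_one (hb : IsS41Basis b) (x y : L) : b.repr ⁅x, y⁆ 1 = 0 := by
  simp [hb.lie_eq]

theorem repr_lie_two (hb : IsS41Basis b) (x y : L) :
    b.repr ⁅x, y⁆ 2 = b.repr x 3 * b.repr y 2 - b.repr x 2 * b.repr y 3 := by
  simp [hb.lie_eq]

theorem repr_lie_three (hb : IsS41Basis b) (x y : L) : b.repr ⁅x, y⁆ 3 = 0 := by
  simp [hb.lie_eq]

theorem lie_basis_zero (hb : IsS41Basis b) (y : L) : ⁅b 0, y⁆ = 0 := by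
  simp [hb.lie_eq]

theorem eq_smul_zero_of_forall_lie_eq_zero (hb : IsS41Basis b) {x : L}
    (hx : ∀ y : L, ⁅x, y⁆ = 0) : x = b.repr x 0 • b 0 := by
  have h₁ := congrArg (fun z => b.repr z 0) (hx (b 3))
  have h₂ := congrArg (fun z => b.repr z 2) (hx (b 3))
  have h₃ := congrArg (fun z => b.repr z 0) (hx (b 1))
  simp [hb.repr_lie_zero, hb.repr_lie_two] at h₁ h₂ h₃
  refine b.ext_elem fun i => ?_
  fin_cases i <;> simp [h₁, h₂, h₃]

theorem eq_smul_two_and_repr_three_eq_one_of_lie_eq_neg [IsDomain R] (hb : IsS41Basis b)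
    {x y : L} (hxy : ⁅x, y⁆ = -x) (hx : x ≠ 0) : x = b.repr x 2 • b 2 ∧ b.repr y 3 = 1 := by
  have h₀ := congrArg (fun z => b.repr z 0) hxy
  have h₁ := congrArg (fun z => b.repr z 1) hxy
  have h₂ := congrArg (fun z => b.repr z 2) hxy
  have h₃ := congrArg (fun z => b.repr z 3) hxy
  simp only [hb.repr_lie_zero, hb.repr_lie_one, hb.repr_lie_two, hb.repr_lie_three, map_neg,
    Finsupp.coe_neg, Pi.neg_apply, zero_eq_neg] at h₀ h₁ h₂ h₃
  simp only [h₁, h₃, zero_mul, zero_sub, neg_inj] at h₀ h₂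
  have hx_eq : x = b.repr x 2 • b 2 := b.ext_elem fun i => by
    fin_cases i <;> simp [← h₀, h₁, h₃]
  have hx₂ : b.repr x 2 ≠ 0 := fun h => hx (by rw [hx_eq, h, zero_smul])
  exact ⟨hx_eq, mul_left_cancel₀ hx₂ (by rw [mul_one, h₂])⟩

theorem map_basis_zero (hb : IsS41Basis b) (T : L ≃ₗ⁅R⁆ L) :
    T (b 0) = b.repr (T (b 0)) 0 • b 0 :=
  hb.eq_smul_zero_of_forall_lie_eq_zero fun y => by
    rw [← T.apply_symm_apply y, ← T.map_lie, hb.lie_basis_zero, map_zero]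

theorem repr_map_basis_zero_ne_zero [Nontrivial R] (hb : IsS41Basis b) (T : L ≃ₗ⁅R⁆ L) :
    b.repr (T (b 0)) 0 ≠ 0 := by
  intro h
  have hT₀ : T (b 0) = 0 := by rw [hb.map_basis_zero T, h, zero_smul]
  exact b.ne_zero 0 (by simpa using hT₀)

theorem map_basis_one [IsDomain R] (hb : IsS41Basis b) (T : L ≃ₗ⁅R⁆ L) :
    T (b 1) = b.repr (T (b 1)) 0 • b 0 + b.repr (T (b 0)) 0 • b 1 := by
  have hT₂_ne : T (b 2) ≠ 0 := by simpa using b.ne_zero 2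
  obtain ⟨hT₂, hT₃⟩ := hb.eq_smul_two_and_repr_three_eq_one_of_lie_eq_neg
    (by rw [← T.map_lie, hb.lie_two_three, map_neg]) hT₂_ne
  have hq : b.repr (T (b 2)) 2 ≠ 0 := fun h => hT₂_ne (by rw [hT₂, h, zero_smul])
  have h₁₂ : ⁅T (b 1), T (b 2)⁆ = 0 := by rw [← T.map_lie, hb.lie_one_two, map_zero]
  have h₁₃ : ⁅T (b 1), T (b 3)⁆ = -T (b 0) := by rw [← T.map_lie, hb.lie_one_three, map_neg]
  have h₃ : b.repr (T (b 1)) 3 = 0 := by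
    have := congrArg (fun z => b.repr z 2) h₁₂
    rw [hT₂] at this
    simpa [hb.repr_lie_two, hq] using this
  have h₁ : b.repr (T (b 1)) 1 = b.repr (T (b 0)) 0 := by
    simpa [hb.repr_lie_zero, h₃, hT₃] using congrArg (fun z => b.repr z 0) h₁₃
  have h₂ : b.repr (T (b 1)) 2 = 0 := by
    have := congrArg (fun z => b.repr z 2) h₁₃
    rw [hb.map_basis_zero T] at this
    simpa [hb.repr_lie_two, h₃, hT₃] using this
  refine b.ext_elem fun i => ?_
  fin_cases i <;> simp [h₁, h₂, h₃]

noncomputable def scaleZeroOne (hb : IsS41Basis b) (u : Rˣ) : L ≃ₗ⁅R⁆ L :=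
  { b.equiv (b.unitsSMul ![u, u, 1, 1]) (Equiv.refl _) with
    map_lie' := fun {x y} => by
      refine b.map_lie_of_map_lie _ (fun i j => ?_) x y
      fin_cases i <;> fin_cases j <;>
        simp [hb.lie_eq, Module.Basis.unitsSMul_apply, Units.smul_def] }

theorem scaleZeroOne_apply_basis (hb : IsS41Basis b) (u : Rˣ) (i : Fin 4) :
    hb.scaleZeroOne u (b i) = ![u, u, 1, 1] i • b i :=
  (b.equiv_apply i _ _).trans (b.unitsSMul_apply i)

end IsS41Basis

/-- For the real 4-dimensional Lie algebra `s₁` (Šnobl–Winternitz `s_{4,1}`), the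
orbit of the bivector `w₀ = e₁ ⊗ e₂ - e₂ ⊗ e₁` under the maps `T ⊗ T`, with `T`
ranging over the Lie algebra automorphisms of `s₁`, is `{ λ • w₀ : λ > 0 }`. -/
theorem stmt_17 {L : Type*} [LieRing L] [LieAlgebra ℝ L]
    (b : Module.Basis (Fin 4) ℝ L)
    (h12 : ⁅b 0, b 1⁆ = 0) (h13 : ⁅b 0, b 2⁆ = 0) (h14 : ⁅b 0, b 3⁆ = 0)
    (h23 : ⁅b 1, b 2⁆ = 0) (h24 : ⁅b 1, b 3⁆ = -b 0) (h34 : ⁅b 2, b 3⁆ = -b 2) :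
    (∀ T : L ≃ₗ[ℝ] L, (∀ x y : L, T ⁅x, y⁆ = ⁅T x, T y⁆) →
        ∃ lam : ℝ, 0 < lam ∧
          TensorProduct.congr T T (b 0 ⊗ₜ[ℝ] b 1 - b 1 ⊗ₜ[ℝ] b 0) =
            lam • (b 0 ⊗ₜ[ℝ] b 1 - b 1 ⊗ₜ[ℝ] b 0)) ∧
      ∀ lam : ℝ, 0 < lam →
        ∃ T : L ≃ₗ[ℝ] L, (∀ x y : L, T ⁅x, y⁆ = ⁅T x, T y⁆) ∧
          TensorProduct.congr T T (b 0 ⊗ₜ[ℝ] b 1 - b 1 ⊗ₜ[ℝ] b 0) =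
            lam • (b 0 ⊗ₜ[ℝ] b 1 - b 1 ⊗ₜ[ℝ] b 0) := by
  have hb : IsS41Basis b := ⟨h12, h13, h14, h23, h24, h34⟩
  refine ⟨fun T hT => ?_, fun lam hlam => ?_⟩
  · let E : L ≃ₗ⁅ℝ⁆ L := { T with map_lie' := hT _ _ }
    exact ⟨_, mul_self_pos.2 (hb.repr_map_basis_zero_ne_zero E),
      LinearEquiv.congr_tmul_sub_tmul_comm_of_triangular (hb.map_basis_zero E)
        (hb.map_basis_one E)⟩
  · let u : ℝˣ := Units.mk0 (√lam) (Real.sqrt_pos.2 hlam).ne'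
    have h₀ : hb.scaleZeroOne u (b 0) = (u : ℝ) • b 0 := hb.scaleZeroOne_apply_basis u 0
    have h₁ : hb.scaleZeroOne u (b 1) = (0 : ℝ) • b 0 + (u : ℝ) • b 1 := by
      rw [hb.scaleZeroOne_apply_basis u 1, zero_smul, zero_add]
      rfl
    refine ⟨(hb.scaleZeroOne u).toLinearEquiv, (hb.scaleZeroOne u).map_lie, ?_⟩
    rw [LinearEquiv.congr_tmul_sub_tmul_comm_of_triangular
      (T := (hb.scaleZeroOne u).toLinearEquiv) h₀ h₁, Units.val_mk0, Real.mul_self_sqrt hlam.le]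
end
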